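/- arXiv:1406.6346 — 6 statements merged into one kernel-verified Lean document; each statement's English description precedes it below -/
import Mathlib

section
/- Suppose u, v : ℝ^N → ℝ are positive, bounded, integrable solutions of the nonlocal KPP equation J⋆w − w + f(x,w) = 0 in ℝ^N, with u ≤ v pointwise. If for every x the map s ↦ f(x,s)/s is strictly decreasing on (0,∞), then u = v almost everywhere. -/
open MeasureTheory Real

noncomputable section

/-! Multiply the equation for `u` by `v`, the one for `v` by `u`, and subtract. As `J` is even,
Fubini makes the convolution terms `∫ v (J ⋆ u)` and `∫ u (J ⋆ v)` equal, so
`∫ (v f(·, u) - u f(·, v)) = 0`. Since `u ≤ v` and `f(x, s)/s` is strictly decreasing, this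
integrand is nonnegative, and strictly positive where `u < v`. -/

open ContinuousLinearMap
open scoped Convolution

section EvenKernel

variable {G : Type*} [AddCommGroup G] [MeasurableSpace G] [MeasurableAdd₂ G] [MeasurableNeg G]
  {μ : Measure G} [μ.IsAddLeftInvariant] {J u v : G → ℝ} {C : ℝ}

theorem integrable_mul_convolution_integrand [SFinite μ]
    (hJ : Integrable J μ) (hu : Integrable u μ) (hv : AEStronglyMeasurable v μ)
    (hvC : ∀ x, ‖v x‖ ≤ C) :
    Integrable (fun p : G × G => v p.1 * (u p.2 * J (p.1 - p.2))) (μ.prod μ) :=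
  (hu.convolution_integrand (lsmul ℝ ℝ) hJ).bdd_mul hv.comp_fst
    (Filter.Eventually.of_forall fun p => hvC p.1)

theorem integral_mul_convolution_integrand_left [μ.IsNegInvariant] (x : G) :
    ∫ y, v x * (u y * J (x - y)) ∂μ = v x * (J ⋆[lsmul ℝ ℝ, μ] u) x := by
  simp only [convolution_lsmul_swap, smul_eq_mul, ← integral_const_mul, mul_comm (u _)]

theorem integral_mul_convolution_integrand_right [μ.IsNegInvariant]
    (hJeven : ∀ z, J (-z) = J z) (y : G) :
    ∫ x, v x * (u y * J (x - y)) ∂μ = u y * (J ⋆[lsmul ℝ ℝ, μ] v) y := by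
  simp only [convolution_lsmul_swap, smul_eq_mul, ← integral_const_mul]
  congr 1 with x
  rw [← neg_sub, hJeven]
  ring

theorem integrable_mul_convolution [SFinite μ] [μ.IsNegInvariant]
    (hJ : Integrable J μ) (hu : Integrable u μ) (hv : AEStronglyMeasurable v μ)
    (hvC : ∀ x, ‖v x‖ ≤ C) :
    Integrable (fun x => v x * (J ⋆[lsmul ℝ ℝ, μ] u) x) μ := by
  simpa only [integral_mul_convolution_integrand_left] using
    (integrable_mul_convolution_integrand hJ hu hv hvC).integral_prod_left

theorem integrable_mul_convolution_of_even [SFinite μ] [μ.IsNegInvariant]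
    (hJ : Integrable J μ) (hJeven : ∀ z, J (-z) = J z)
    (hu : Integrable u μ) (hv : AEStronglyMeasurable v μ) (hvC : ∀ x, ‖v x‖ ≤ C) :
    Integrable (fun y => u y * (J ⋆[lsmul ℝ ℝ, μ] v) y) μ := by
  simpa only [integral_mul_convolution_integrand_right hJeven] using
    (integrable_mul_convolution_integrand hJ hu hv hvC).integral_prod_right

theorem integral_mul_convolution_comm [SFinite μ] [μ.IsNegInvariant]
    (hJ : Integrable J μ) (hJeven : ∀ z, J (-z) = J z)
    (hu : Integrable u μ) (hv : AEStronglyMeasurable v μ) (hvC : ∀ x, ‖v x‖ ≤ C) :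
    ∫ x, v x * (J ⋆[lsmul ℝ ℝ, μ] u) x ∂μ =
      ∫ x, u x * (J ⋆[lsmul ℝ ℝ, μ] v) x ∂μ := by
  calc ∫ x, v x * (J ⋆[lsmul ℝ ℝ, μ] u) x ∂μ
      = ∫ x, ∫ y, v x * (u y * J (x - y)) ∂μ ∂μ := by
        simp only [integral_mul_convolution_integrand_left]
    _ = ∫ y, ∫ x, v x * (u y * J (x - y)) ∂μ ∂μ :=
        integral_integral_swap (integrable_mul_convolution_integrand hJ hu hv hvC)
    _ = ∫ y, u y * (J ⋆[lsmul ℝ ℝ, μ] v) y ∂μ := by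
        simp only [integral_mul_convolution_integrand_right hJeven]

end EvenKernel

theorem stmt_6_general (N : ℕ)
    (J : EuclideanSpace ℝ (Fin N) → ℝ)
    (f : EuclideanSpace ℝ (Fin N) → ℝ → ℝ)
    (u v : EuclideanSpace ℝ (Fin N) → ℝ)
    (hJsym : ∀ z, J (-z) = J z)
    (hJint : Integrable J)
    (hupos : ∀ x, 0 < u x) (hvpos : ∀ x, 0 < v x)
    (hvbd : ∃ C, ∀ x, v x ≤ C)
    (huint : Integrable u) (hvint : Integrable v)
    (hueq : ∀ x, (∫ y, J (x - y) * u y) - u x + f x (u x) = 0)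
    (hveq : ∀ x, (∫ y, J (x - y) * v y) - v x + f x (v x) = 0)
    (hle : ∀ x, u x ≤ v x)
    (hdec : ∀ x s t, 0 < s → s < t → f x t / t < f x s / s) :
    ∀ᵐ x : EuclideanSpace ℝ (Fin N), u x = v x := by
  obtain ⟨C, hC⟩ := hvbd
  have hvC : ∀ x, ‖v x‖ ≤ C := fun x => (Real.norm_of_nonneg (hvpos x).le).trans_le (hC x)
  have hconv : ∀ w x, ∫ y, J (x - y) * w y = (J ⋆ w) x := fun w x => by
    simp only [convolution_lsmul_swap, smul_eq_mul]
  set g := fun x => u x * (J ⋆ v) x - v x * (J ⋆ u) x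
  have huv := integrable_mul_convolution_of_even hJint hJsym huint hvint.aestronglyMeasurable hvC
  have hvu := integrable_mul_convolution hJint huint hvint.aestronglyMeasurable hvC
  have hg_zero : ∫ x, g x = 0 := by
    rw [integral_sub huv hvu,
      integral_mul_convolution_comm hJint hJsym huint hvint.aestronglyMeasurable hvC, sub_self]
  have hg_eq : ∀ x, g x = v x * f x (u x) - u x * f x (v x) := fun x => by
    have hu := hueq x
    have hv := hveq x
    rw [hconv] at hu hv
    simp only [g]
    linear_combination u x * hv - v x * hu
  have hg_pos : ∀ x, u x < v x → 0 < g x := fun x hx => by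
    have hd := hdec x (u x) (v x) (hupos x) hx
    rw [div_lt_div_iff₀ (hvpos x) (hupos x)] at hd
    rw [hg_eq]
    linarith
  have hg_nonneg : ∀ x, 0 ≤ g x := fun x => by
    rcases (hle x).eq_or_lt with h | h
    · rw [hg_eq, h, sub_self]
    · exact (hg_pos x h).le
  filter_upwards [(integral_eq_zero_iff_of_nonneg hg_nonneg (huv.sub hvu)).mp hg_zero] with x hx
  by_contra hne
  exact (hg_pos x ((hle x).lt_of_ne hne)).ne' hx

theorem stmt_6 (N : ℕ)
    (J : EuclideanSpace ℝ (Fin N) → ℝ)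
    (f : EuclideanSpace ℝ (Fin N) → ℝ → ℝ)
    (u v : EuclideanSpace ℝ (Fin N) → ℝ)
    (hJc : Continuous J) (hJpos : ∀ z, 0 ≤ J z) (hJsym : ∀ z, J (-z) = J z)
    (hJint : Integrable J) (hJmass : ∫ z, J z = 1)
    (hupos : ∀ x, 0 < u x) (hvpos : ∀ x, 0 < v x)
    (hubd : ∃ C, ∀ x, u x ≤ C) (hvbd : ∃ C, ∀ x, v x ≤ C)
    (huint : Integrable u) (hvint : Integrable v)
    (hueq : ∀ x, (∫ y, J (x - y) * u y) - u x + f x (u x) = 0)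
    (hveq : ∀ x, (∫ y, J (x - y) * v y) - v x + f x (v x) = 0)
    (hle : ∀ x, u x ≤ v x)
    (hdec : ∀ x s t, 0 < s → s < t → f x t / t < f x s / s) :
    ∀ᵐ x : EuclideanSpace ℝ (Fin N), u x = v x :=
  stmt_6_general N J f u v hJsym hJint hupos hvpos hvbd huint hvint hueq hveq hle hdec
end
end

section
/- Let J satisfy (H1)-(H2), be compactly supported, and let β ∈ C(ℝ^N) be bounded with limsup_{|x|→∞} β(x) < 0. Then there exist α > 0, R₀ > 0 and a constant h < 0 such that the function w(x) = C e^{−α|x|} (any C > 0) satisfies (J⋆w)(x) − w(x) + β(x)w(x) ≤ h·w(x) < 0 for all |x| ≥ R₀. -/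
open MeasureTheory Real Filter

noncomputable section

/-! If `supp J ⊆ closedBall 0 M`, the triangle inequality gives `e^{-α‖y‖} ≤ e^{αM} e^{-α‖x‖}`
wherever `J (x - y) ≠ 0`, so `J ⋆ w ≤ e^{αM} w` for `w = C e^{-α‖·‖}`. Far out, `β < c < 0`, and
choosing `α` with `e^{αM} = 1 - c/2` leaves `J ⋆ w - w + β w ≤ (c/2) w`. -/

theorem exists_pos_forall_norm_ge_lt_of_limsup_cocompact_lt {E : Type*} [SeminormedAddCommGroup E]
    {f : E → ℝ} (hf : IsBoundedUnder (· ≤ ·) (cocompact E) f) {c : ℝ}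
    (hc : limsup f (cocompact E) < c) : ∃ R > 0, ∀ x, R ≤ ‖x‖ → f x < c := by
  have hcob : ∀ᶠ x in comap norm atTop, f x < c := by
    rw [comap_norm_atTop]
    exact Metric.cobounded_le_cocompact (eventually_lt_of_limsup_lt hc hf)
  obtain ⟨R, hR⟩ := (atTop_basis.comap norm).eventually_iff.mp hcob
  exact ⟨max R 1, by positivity, fun x hx => hR.2 (le_of_max_le_left hx)⟩

theorem exp_neg_mul_norm_le_of_norm_sub_le {E : Type*} [SeminormedAddCommGroup E] {α M : ℝ}
    (hα : 0 ≤ α) {x y : E} (h : ‖x - y‖ ≤ M) :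
    exp (-α * ‖y‖) ≤ exp (α * M) * exp (-α * ‖x‖) := by
  rw [← exp_add, exp_le_exp]
  nlinarith [norm_sub_norm_le x y]

theorem integral_mul_exp_neg_norm_le {E : Type*} [NormedAddCommGroup E] [MeasurableSpace E]
    [BorelSpace E] {μ : Measure E} [μ.IsAddLeftInvariant] [μ.IsNegInvariant]
    {J : E → ℝ} (hJi : Integrable J μ) (hJ0 : ∀ z, 0 ≤ J z) {M : ℝ}
    (hJM : Function.support J ⊆ Metric.closedBall 0 M) {α C : ℝ} (hα : 0 ≤ α) (hC : 0 ≤ C)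
    (x : E) :
    ∫ y, J (x - y) * (C * exp (-α * ‖y‖)) ∂μ
      ≤ exp (α * M) * (∫ z, J z ∂μ) * (C * exp (-α * ‖x‖)) := by
  have hpt : ∀ y, J (x - y) * (C * exp (-α * ‖y‖))
      ≤ J (x - y) * (C * (exp (α * M) * exp (-α * ‖x‖))) := by
    intro y
    by_cases hxy : J (x - y) = 0
    · simp [hxy]
    have hxyM : ‖x - y‖ ≤ M := mem_closedBall_zero_iff.mp (hJM hxy)
    gcongr
    · exact hJ0 _
    · exact exp_neg_mul_norm_le_of_norm_sub_le hα hxyM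
  calc ∫ y, J (x - y) * (C * exp (-α * ‖y‖)) ∂μ
      ≤ ∫ y, J (x - y) * (C * (exp (α * M) * exp (-α * ‖x‖))) ∂μ :=
        integral_mono_of_nonneg (.of_forall fun y => by have := hJ0 (x - y); positivity)
          ((hJi.comp_sub_left x).mul_const _) (.of_forall hpt)
    _ = exp (α * M) * (∫ z, J z ∂μ) * (C * exp (-α * ‖x‖)) := by
        rw [integral_mul_const, integral_sub_left_eq_self J μ x]; ring

theorem stmt_7_general (N : ℕ)
    (J β : EuclideanSpace ℝ (Fin N) → ℝ)
    (hJpos : ∀ z, 0 ≤ J z)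
    (hJint : Integrable J) (hJmass : ∫ z, J z = 1)
    (hJcs : HasCompactSupport J)
    (hβbd : ∃ C, ∀ x, |β x| ≤ C)
    (hβlim : limsup β (cocompact (EuclideanSpace ℝ (Fin N))) < 0) :
    ∃ α > (0:ℝ), ∃ R₀ > (0:ℝ), ∃ h < (0:ℝ), ∀ C > (0:ℝ),
      ∀ x : EuclideanSpace ℝ (Fin N), R₀ ≤ ‖x‖ →
        (∫ y, J (x - y) * (C * Real.exp (-α * ‖y‖)))
            - C * Real.exp (-α * ‖x‖) + β x * (C * Real.exp (-α * ‖x‖))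
          ≤ h * (C * Real.exp (-α * ‖x‖)) ∧
        h * (C * Real.exp (-α * ‖x‖)) < 0 := by
  obtain ⟨c, hβc, hc⟩ := exists_between hβlim
  obtain ⟨Cβ, hCβ⟩ := hβbd
  obtain ⟨R₀, hR₀, hβR₀⟩ := exists_pos_forall_norm_ge_lt_of_limsup_cocompact_lt
    (isBoundedUnder_of ⟨Cβ, fun x => (abs_le.mp (hCβ x)).2⟩) hβc
  obtain ⟨M, hM, hJM⟩ := hJcs.isBounded.subset_closedBall_lt 0 0
  set α := log (1 - c / 2) / M
  have hexp : exp (α * M) = 1 - c / 2 := by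
    rw [div_mul_cancel₀ _ hM.ne', exp_log (by linarith)]
  have hα : 0 < α := div_pos (log_pos (by linarith)) hM
  refine ⟨α, hα, R₀, hR₀, c / 2, by linarith, fun C hC x hx => ?_⟩
  have hconv := integral_mul_exp_neg_norm_le hJint hJpos ((subset_tsupport J).trans hJM)
    hα.le hC.le x
  rw [hexp, hJmass] at hconv
  have hw : 0 < C * exp (-α * ‖x‖) := by positivity
  have hβx := mul_le_mul_of_nonneg_right (hβR₀ x hx).le hw.le
  exact ⟨by linarith, mul_neg_of_neg_of_pos (by linarith) hw⟩

theorem stmt_7 (N : ℕ)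
    (J β : EuclideanSpace ℝ (Fin N) → ℝ)
    (hJc : Continuous J) (hJpos : ∀ z, 0 ≤ J z) (hJsym : ∀ z, J (-z) = J z)
    (hJint : Integrable J) (hJmass : ∫ z, J z = 1) (hJ0 : 0 < J 0)
    (hJcs : HasCompactSupport J)
    (hβc : Continuous β) (hβbd : ∃ C, ∀ x, |β x| ≤ C)
    (hβlim : limsup β (cocompact (EuclideanSpace ℝ (Fin N))) < 0) :
    ∃ α > (0:ℝ), ∃ R₀ > (0:ℝ), ∃ h < (0:ℝ), ∀ C > (0:ℝ),
      ∀ x : EuclideanSpace ℝ (Fin N), R₀ ≤ ‖x‖ →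
        (∫ y, J (x - y) * (C * Real.exp (-α * ‖y‖)))
            - C * Real.exp (-α * ‖x‖) + β x * (C * Real.exp (-α * ‖x‖))
          ≤ h * (C * Real.exp (-α * ‖x‖)) ∧
        h * (C * Real.exp (-α * ‖x‖)) < 0 :=
  stmt_7_general N J β hJpos hJint hJmass hJcs hβbd hβlim
end
end

section
/- Let J be a continuous nonnegative symmetric kernel on ℝ^N of unit mass, κ > 0, and let z̄ : ℝ^N → ℝ be a bounded continuous nonnegative function satisfying (J⋆z̄)(x) − z̄(x) − κ z̄(x) ≥ 0 for all x ∈ ℝ^N. If J is compactly supported, then z̄ ≡ 0. -/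
/-!
Let `M = sup z`. Since `J(x - ·)` is a probability density, `(J ⋆ z)(x) ≤ M`, so the inequality
gives `(1 + κ) z(x) ≤ M` for every `x`; taking the supremum, `(1 + κ) M ≤ M`, whence `M = 0`.
-/

open MeasureTheory Real

noncomputable section

theorem integral_mul_le_of_integral_eq_one {α : Type*} [MeasurableSpace α] {μ : Measure α}
    {w g : α → ℝ} {M : ℝ} (hw : Integrable w μ) (hw0 : ∀ y, 0 ≤ w y)
    (hmass : ∫ y, w y ∂μ = 1) (hg : AEStronglyMeasurable g μ) (hg0 : ∀ y, 0 ≤ g y)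
    (hgM : ∀ y, g y ≤ M) :
    ∫ y, w y * g y ∂μ ≤ M := by
  have hwg : Integrable (fun y => w y * g y) μ :=
    hw.mul_bdd hg (Filter.Eventually.of_forall fun y => by
      rw [Real.norm_of_nonneg (hg0 y)]; exact hgM y)
  calc ∫ y, w y * g y ∂μ ≤ ∫ y, w y * M ∂μ :=
        integral_mono hwg (hw.mul_const M) fun y => mul_le_mul_of_nonneg_left (hgM y) (hw0 y)
    _ = M := by rw [integral_mul_const, hmass, one_mul]

theorem eq_zero_of_one_add_mul_le_iSup {ι : Type*} {z : ι → ℝ} {κ : ℝ} (hκ : 0 < κ)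
    (hbdd : BddAbove (Set.range z)) (hz0 : ∀ x, 0 ≤ z x)
    (h : ∀ x, (1 + κ) * z x ≤ ⨆ x, z x) (x : ι) :
    z x = 0 := by
  have : Nonempty ι := ⟨x⟩
  set M := ⨆ x, z x
  have hM_le : (1 + κ) * M ≤ M := by
    rw [← le_div_iff₀' (by linarith)]
    exact ciSup_le fun y => by rw [le_div_iff₀' (by linarith)]; exact h y
  have hzM : z x ≤ M := le_ciSup hbdd x
  nlinarith [hz0 x]

theorem stmt_8_general (N : ℕ) (κ : ℝ) (hκ : 0 < κ)
    (J z : EuclideanSpace ℝ (Fin N) → ℝ)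
    (hJpos : ∀ x, 0 ≤ J x)
    (hJint : Integrable J) (hJmass : ∫ x, J x = 1)
    (hzc : Continuous z) (hzpos : ∀ x, 0 ≤ z x) (hzbd : ∃ C, ∀ x, z x ≤ C)
    (hineq : ∀ x, 0 ≤ (∫ y, J (x - y) * z y) - z x - κ * z x) :
    ∀ x, z x = 0 := by
  obtain ⟨C, hC⟩ := hzbd
  have hbdd : BddAbove (Set.range z) := ⟨C, by rintro _ ⟨x, rfl⟩; exact hC x⟩
  have hconv_le (x) : ∫ y, J (x - y) * z y ≤ ⨆ x, z x :=
    integral_mul_le_of_integral_eq_one (hJint.comp_sub_left x) (fun _ => hJpos _)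
      ((integral_sub_left_eq_self J volume x).trans hJmass) hzc.aestronglyMeasurable hzpos
      (le_ciSup hbdd)
  exact eq_zero_of_one_add_mul_le_iSup hκ hbdd hzpos fun x => by
    linarith [hineq x, hconv_le x]

theorem stmt_8 (N : ℕ) (κ : ℝ) (hκ : 0 < κ)
    (J z : EuclideanSpace ℝ (Fin N) → ℝ)
    (hJc : Continuous J) (hJpos : ∀ x, 0 ≤ J x) (hJsym : ∀ x, J (-x) = J x)
    (hJint : Integrable J) (hJmass : ∫ x, J x = 1)
    (hJcs : HasCompactSupport J)
    (hzc : Continuous z) (hzpos : ∀ x, 0 ≤ z x) (hzbd : ∃ C, ∀ x, z x ≤ C)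
    (hineq : ∀ x, 0 ≤ (∫ y, J (x - y) * z y) - z x - κ * z x) :
    ∀ x, z x = 0 :=
  stmt_8_general N κ hκ J z hJpos hJint hJmass hzc hzpos hzbd hineq
end
end

section
/- Let u_ε be a positive bounded solution of (1/ε^m)(J_ε⋆u_ε − u_ε) + u_ε(a(x) − u_ε) = 0 in ℝ^N, where a ∈ C¹(ℝ^N) is bounded with a⁺ of compact support and a⁺ ≢ 0, and J_ε(z) = ε^{−N}J(z/ε). Then u_ε ≤ M := ‖a‖_∞, ∫_{ℝ^N} u_ε² dx ≤ M ∫ a⁺ dx, and (1/(2ε^m)) ∬ J_ε(x−y)(u_ε(x)−u_ε(y))² dx dy ≤ 4M² ∫ a⁺ dx. -/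
/-!
Writing `v = J_ε ⋆ u`, the equation reads `v - u = ε ^ m u (u - a)`.

The bound `u ≤ M` is a maximum principle: `v ≤ sup u`, so at points where `u` is nearly maximal
`v - u` is nearly `≤ 0`, whereas `u (u - a)` stays bounded away from `0` there if `sup u > M`.

Integrating the equation, `∫ v = ∫ u` because `J_ε` has unit mass, hence `∫ u² = ∫ a u ≤ M ∫ a⁺`.
Testing it against `u` instead, and expanding the square,
`∬ J_ε(x - y) (u x - u y)² = 2 ∫ u (u - v) = 2 ε ^ m ∫ u² (a - u) ≤ 2 ε ^ m M² ∫ a⁺`.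
-/

open MeasureTheory Real

noncomputable section

open scoped Convolution
open Module

theorem le_of_sub_eq_mul_mul_sub {X : Type*} {u a v : X → ℝ} {κ M : ℝ} (hκ : 0 < κ)
    (hu_pos : ∀ x, 0 < u x) (hu_bdd : BddAbove (Set.range u)) (ha : ∀ x, a x ≤ M)
    (hv : ∀ x, v x ≤ ⨆ y, u y) (h : ∀ x, v x - u x = κ * (u x * (u x - a x))) (x : X) :
    u x ≤ M := by
  by_contra! hMx
  set S := ⨆ y, u y
  have huS : ∀ y, u y ≤ S := le_ciSup hu_bdd
  obtain ⟨t, ht, htS⟩ := exists_between (show max M 0 < S from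
    max_lt (hMx.trans_le (huS x)) ((hu_pos x).trans_le (huS x)))
  have htM : M < t := (le_max_left _ _).trans_lt ht
  have ht0 : 0 < t := (le_max_right _ _).trans_lt ht
  -- near the supremum, `u (u - a)` stays above `t (t - M) > 0`, while `v - u` becomes small
  obtain ⟨_, ⟨y, rfl⟩, hy⟩ := exists_lt_of_lt_csSup (Set.range_nonempty_iff_nonempty.2 ⟨x⟩)
    (show S - min (S - t) (κ * (t * (t - M))) < S by
      have : 0 < κ * (t * (t - M)) := by have := sub_pos.2 htM; positivity
      linarith [lt_min (sub_pos.2 htS) this])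
  have hyt : t ≤ u y := by linarith [min_le_left (S - t) (κ * (t * (t - M)))]
  have hlow : t * (t - M) ≤ u y * (u y - a y) :=
    mul_le_mul hyt (by linarith [ha y]) (by linarith) (by linarith)
  have := h y
  nlinarith [hv y, min_le_right (S - t) (κ * (t * (t - M)))]

theorem integrable_sq_of_abs_le {X : Type*} [MeasurableSpace X] {μ : Measure X} {u : X → ℝ}
    (hu : Integrable u μ) {C : ℝ} (hC : ∀ x, |u x| ≤ C) : Integrable (fun x => u x ^ 2) μ := by
  simpa only [sq] using hu.mul_bdd hu.1 (Filter.Eventually.of_forall hC)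

section Convolution

variable {G : Type*} [MeasurableSpace G] [AddCommGroup G] [MeasurableAdd₂ G] [MeasurableNeg G]
  {μ : Measure G} [μ.IsAddLeftInvariant]

theorem integral_convolution_mul_of_integral_eq_one [SFinite μ] {K f : G → ℝ}
    (hK : Integrable K μ) (hK_mass : ∫ z, K z ∂μ = 1) (hf : Integrable f μ) :
    ∫ x, (K ⋆[ContinuousLinearMap.mul ℝ ℝ, μ] f) x ∂μ = ∫ x, f x ∂μ := by
  rw [integral_convolution _ hK hf, hK_mass, ContinuousLinearMap.mul_apply', one_mul]

theorem integral_mul_sub_eq_zero_of_convolution_sub_eq [SFinite μ] {K u a : G → ℝ} {κ : ℝ}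
    (hK : Integrable K μ) (hK_mass : ∫ z, K z ∂μ = 1) (hu : Integrable u μ) (hκ : κ ≠ 0)
    (h : ∀ x, (K ⋆[ContinuousLinearMap.mul ℝ ℝ, μ] u) x - u x = κ * (u x * (u x - a x))) :
    ∫ x, u x * (u x - a x) ∂μ = 0 := by
  have h0 : ∫ x, ((K ⋆[ContinuousLinearMap.mul ℝ ℝ, μ] u) x - u x) ∂μ = 0 := by
    rw [integral_sub (hK.integrable_convolution _ hu) hu,
      integral_convolution_mul_of_integral_eq_one hK hK_mass hu, sub_self]
  simp_rw [h, integral_const_mul] at h0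
  exact (mul_eq_zero.1 h0).resolve_left hκ

theorem integral_sq_le_of_convolution_sub_eq [SFinite μ] {K u a : G → ℝ} {κ M : ℝ}
    (hK : Integrable K μ) (hK_mass : ∫ z, K z ∂μ = 1) (hu : Integrable u μ)
    (hu_nonneg : ∀ x, 0 ≤ u x) (hu_le : ∀ x, u x ≤ M) (ha : AEStronglyMeasurable a μ)
    (ha_abs : ∀ x, |a x| ≤ M) (ha_plus : Integrable (fun x => max (a x) 0) μ) (hκ : κ ≠ 0)
    (h : ∀ x, (K ⋆[ContinuousLinearMap.mul ℝ ℝ, μ] u) x - u x = κ * (u x * (u x - a x))) :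
    ∫ x, u x ^ 2 ∂μ ≤ M * ∫ x, max (a x) 0 ∂μ := by
  have hu_abs : ∀ x, |u x| ≤ M := fun x => abs_le.2 ⟨by linarith [hu_nonneg x, hu_le x], hu_le x⟩
  have hu2 := integrable_sq_of_abs_le hu hu_abs
  have hau : Integrable (fun x => a x * u x) μ := hu.bdd_mul ha (Filter.Eventually.of_forall ha_abs)
  calc ∫ x, u x ^ 2 ∂μ = ∫ x, a x * u x ∂μ := by
        rw [← sub_eq_zero, ← integral_sub hu2 hau,
          ← integral_mul_sub_eq_zero_of_convolution_sub_eq hK hK_mass hu hκ h]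
        congr 1; funext x; ring
    _ ≤ ∫ x, max (a x) 0 * M ∂μ := integral_mono hau (ha_plus.mul_const M) fun x =>
        mul_le_mul (le_max_left _ _) (hu_le x) (hu_nonneg x) (le_max_right _ _)
    _ = M * ∫ x, max (a x) 0 ∂μ := by rw [integral_mul_const, mul_comm]

variable [μ.IsNegInvariant]

theorem integrable_mul_comp_sub_left {K u : G → ℝ} (hK : Integrable K μ)
    (hu : AEStronglyMeasurable u μ) {C : ℝ} (hC : ∀ y, |u y| ≤ C) (x : G) :
    Integrable (fun y => K (x - y) * u y) μ :=
  (hK.comp_sub_left x).mul_bdd hu (Filter.Eventually.of_forall hC)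

theorem convolution_mul_le {K u : G → ℝ} (hK_nonneg : ∀ z, 0 ≤ K z) (hK : Integrable K μ)
    (hK_mass : ∫ z, K z ∂μ = 1) (hu : AEStronglyMeasurable u μ) {C : ℝ} (hC : ∀ y, |u y| ≤ C)
    {S : ℝ} (huS : ∀ y, u y ≤ S) (x : G) :
    (K ⋆[ContinuousLinearMap.mul ℝ ℝ, μ] u) x ≤ S := by
  rw [convolution_mul_swap]
  calc ∫ y, K (x - y) * u y ∂μ ≤ ∫ y, K (x - y) * S ∂μ :=
        integral_mono (integrable_mul_comp_sub_left hK hu hC x) ((hK.comp_sub_left x).mul_const S)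
          fun y => mul_le_mul_of_nonneg_left (huS y) (hK_nonneg _)
    _ = S := by rw [integral_mul_const, integral_sub_left_eq_self K μ x, hK_mass, one_mul]

theorem le_of_convolution_sub_eq {K u a : G → ℝ} {κ M : ℝ} (hK_nonneg : ∀ z, 0 ≤ K z)
    (hK : Integrable K μ) (hK_mass : ∫ z, K z ∂μ = 1) (hu : AEStronglyMeasurable u μ)
    (hu_pos : ∀ x, 0 < u x) {C : ℝ} (hC : ∀ x, u x ≤ C) (ha : ∀ x, a x ≤ M) (hκ : 0 < κ)
    (h : ∀ x, (K ⋆[ContinuousLinearMap.mul ℝ ℝ, μ] u) x - u x = κ * (u x * (u x - a x))) (x : G) :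
    u x ≤ M := by
  have hu_bdd : BddAbove (Set.range u) := ⟨C, Set.forall_mem_range.2 hC⟩
  have hu_abs : ∀ x, |u x| ≤ C := fun x => (abs_of_pos (hu_pos x)).trans_le (hC x)
  exact le_of_sub_eq_mul_mul_sub hκ hu_pos hu_bdd ha
    (convolution_mul_le hK_nonneg hK hK_mass hu hu_abs (le_ciSup hu_bdd)) h x

theorem integral_integral_mul_sub_sq [SFinite μ] {K u : G → ℝ} (hK : Integrable K μ)
    (hK_mass : ∫ z, K z ∂μ = 1) (hu : Integrable u μ) {C : ℝ} (hC : ∀ y, |u y| ≤ C) :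
    ∫ x, ∫ y, K (x - y) * (u x - u y) ^ 2 ∂μ ∂μ
      = 2 * ∫ x, u x * (u x - (K ⋆[ContinuousLinearMap.mul ℝ ℝ, μ] u) x) ∂μ := by
  set L := ContinuousLinearMap.mul ℝ ℝ
  -- `K (x - ·)` and `K (· - y)` both have unit mass, so the terms `u x ^ 2` and `u y ^ 2`
  -- each contribute `∫ u ^ 2`
  have hu2 := integrable_sq_of_abs_le hu hC
  have hu2_abs : ∀ y, |u y ^ 2| ≤ C ^ 2 := fun y => by
    rw [abs_pow]; exact pow_le_pow_left₀ (abs_nonneg _) (hC y) 2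
  have hconv : Integrable (K ⋆[L, μ] u) μ := hK.integrable_convolution L hu
  have hconv2 : Integrable (K ⋆[L, μ] fun x => u x ^ 2) μ := hK.integrable_convolution L hu2
  have hinner : ∀ x, ∫ y, K (x - y) * (u x - u y) ^ 2 ∂μ
      = 2 * (u x * (u x - (K ⋆[L, μ] u) x)) + ((K ⋆[L, μ] fun x => u x ^ 2) x - u x ^ 2) := by
    intro x
    have hexpand : (fun y => K (x - y) * (u x - u y) ^ 2)
        = fun y => u x ^ 2 * K (x - y) - 2 * u x * (K (x - y) * u y) + K (x - y) * u y ^ 2 := by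
      funext y; ring
    rw [hexpand, integral_add, integral_sub, integral_const_mul, integral_const_mul,
      integral_sub_left_eq_self K μ x, hK_mass, convolution_mul_swap, convolution_mul_swap]
    · ring
    · exact (hK.comp_sub_left x).const_mul _
    · exact (integrable_mul_comp_sub_left hK hu.1 hC x).const_mul _
    · exact ((hK.comp_sub_left x).const_mul _).sub
        ((integrable_mul_comp_sub_left hK hu.1 hC x).const_mul _)
    · exact integrable_mul_comp_sub_left hK hu2.1 hu2_abs x
  have hcross : Integrable (fun x => u x * (u x - (K ⋆[L, μ] u) x)) μ :=
    (hu.sub hconv).bdd_mul hu.1 (Filter.Eventually.of_forall hC)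
  have hdefect : Integrable (fun x => (K ⋆[L, μ] fun x => u x ^ 2) x - u x ^ 2) μ :=
    hconv2.sub hu2
  rw [integral_congr_ae (Filter.Eventually.of_forall hinner),
    integral_add (hcross.const_mul 2) hdefect, integral_const_mul, integral_sub hconv2 hu2,
    integral_convolution_mul_of_integral_eq_one hK hK_mass hu2, sub_self, add_zero]

theorem integral_integral_mul_sub_sq_le_of_convolution_sub_eq [SFinite μ] {K u a : G → ℝ}
    {κ M : ℝ} (hK : Integrable K μ) (hK_mass : ∫ z, K z ∂μ = 1) (hu : Integrable u μ)
    (hu_nonneg : ∀ x, 0 ≤ u x) (hu_le : ∀ x, u x ≤ M) (ha : AEStronglyMeasurable a μ)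
    (ha_abs : ∀ x, |a x| ≤ M) (ha_plus : Integrable (fun x => max (a x) 0) μ) (hκ : 0 ≤ κ)
    (h : ∀ x, (K ⋆[ContinuousLinearMap.mul ℝ ℝ, μ] u) x - u x = κ * (u x * (u x - a x))) :
    ∫ x, ∫ y, K (x - y) * (u x - u y) ^ 2 ∂μ ∂μ ≤ 2 * κ * (M ^ 2 * ∫ x, max (a x) 0 ∂μ) := by
  have hu_abs : ∀ x, |u x| ≤ M := fun x => abs_le.2 ⟨by linarith [hu_nonneg x, hu_le x], hu_le x⟩
  have hu2 := integrable_sq_of_abs_le hu hu_abs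
  have hloss : Integrable (fun x => u x ^ 2 * (a x - u x)) μ :=
    hu2.mul_bdd (c := 2 * M) (ha.sub hu.1) (Filter.Eventually.of_forall fun x => by
      rw [Real.norm_eq_abs, abs_le]
      constructor <;> linarith [abs_le.1 (ha_abs x), abs_le.1 (hu_abs x)])
  have hloss_le : ∫ x, u x ^ 2 * (a x - u x) ∂μ ≤ M ^ 2 * ∫ x, max (a x) 0 ∂μ := by
    rw [← integral_const_mul]
    refine integral_mono hloss (ha_plus.const_mul _) fun x => ?_
    have hu2M : u x ^ 2 ≤ M ^ 2 := pow_le_pow_left₀ (hu_nonneg x) (hu_le x) 2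
    nlinarith [le_max_left (a x) 0, le_max_right (a x) 0, sq_nonneg (u x), hu_nonneg x]
  rw [integral_integral_mul_sub_sq hK hK_mass hu hu_abs]
  calc 2 * ∫ x, u x * (u x - (K ⋆[ContinuousLinearMap.mul ℝ ℝ, μ] u) x) ∂μ
      = 2 * ∫ x, κ * (u x ^ 2 * (a x - u x)) ∂μ := by
        congr 1
        exact integral_congr_ae (Filter.Eventually.of_forall fun x => by
          linear_combination (-u x) * h x)
    _ = 2 * κ * ∫ x, u x ^ 2 * (a x - u x) ∂μ := by rw [integral_const_mul, mul_assoc]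
    _ ≤ 2 * κ * (M ^ 2 * ∫ x, max (a x) 0 ∂μ) := by gcongr

end Convolution

section Rescaling

variable {E : Type*} [NormedAddCommGroup E] [NormedSpace ℝ E] [FiniteDimensional ℝ E]
  [MeasurableSpace E] [BorelSpace E] {μ : Measure E} [μ.IsAddHaarMeasure]

def rescaleKernel (ε : ℝ) (K : E → ℝ) (z : E) : ℝ := (ε ^ finrank ℝ E)⁻¹ * K (ε⁻¹ • z)

theorem integrable_rescaleKernel {K : E → ℝ} (hK : Integrable K μ) {ε : ℝ} (hε : ε ≠ 0) :
    Integrable (rescaleKernel ε K) μ :=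
  ((integrable_comp_smul_iff μ K (inv_ne_zero hε)).2 hK).const_mul _

theorem integral_rescaleKernel (K : E → ℝ) {ε : ℝ} (hε : 0 < ε) :
    ∫ z, rescaleKernel ε K z ∂μ = ∫ z, K z ∂μ := by
  have hεd : 0 < ε ^ finrank ℝ E := pow_pos hε _
  simp only [rescaleKernel]
  rw [integral_const_mul, Measure.integral_comp_inv_smul, abs_of_pos hεd, smul_eq_mul,
    inv_mul_cancel_left₀ hεd.ne']

end Rescaling

theorem stmt_10_general (N : ℕ) (m ε : ℝ) (hε : 0 < ε)
    (J a u : EuclideanSpace ℝ (Fin N) → ℝ)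
    (hJpos : ∀ z, 0 ≤ J z)
    (hJint : Integrable J) (hJmass : ∫ z, J z = 1)
    (hac : ContDiff ℝ 1 a) (habd : ∃ C, ∀ x, |a x| ≤ C)
    (haplus_cs : HasCompactSupport (fun x => max (a x) 0))
    (Jε : EuclideanSpace ℝ (Fin N) → ℝ)
    (hJε : ∀ z, Jε z = (ε ^ N)⁻¹ * J (ε⁻¹ • z))
    (hupos : ∀ x, 0 < u x) (hubd : ∃ C, ∀ x, u x ≤ C)
    (huint : Integrable u)
    (heq : ∀ x, (1 / ε ^ m) * ((∫ y, Jε (x - y) * u y) - u x) + u x * (a x - u x) = 0)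
    (M : ℝ) (hM : M = ⨆ x, |a x|) :
    (∀ x, u x ≤ M) ∧
    (∫ x, (u x) ^ 2) ≤ M * ∫ x, max (a x) 0 ∧
    (1 / (2 * ε ^ m)) * ∫ x, ∫ y, Jε (x - y) * (u x - u y) ^ 2
      ≤ 4 * M ^ 2 * ∫ x, max (a x) 0 := by
  obtain rfl : Jε = rescaleKernel ε J := by
    funext z; simp only [hJε, rescaleKernel, finrank_euclideanSpace, Fintype.card_fin]
  have hK_int := integrable_rescaleKernel hJint hε.ne'
  have hK_mass : ∫ z, rescaleKernel ε J z = 1 := (integral_rescaleKernel J hε).trans hJmass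
  have hεm : 0 < ε ^ m := rpow_pos_of_pos hε m
  have hconv_sub : ∀ x, (rescaleKernel ε J ⋆[ContinuousLinearMap.mul ℝ ℝ, volume] u) x - u x
      = ε ^ m * (u x * (u x - a x)) := fun x => by
    have := heq x
    rw [← convolution_mul_swap] at this
    field_simp at this
    linear_combination this
  obtain ⟨C, hC⟩ := hubd
  have ha_abs : ∀ x, |a x| ≤ M := fun x => by
    obtain ⟨D, hD⟩ := habd
    exact hM ▸ le_ciSup ⟨D, Set.forall_mem_range.2 hD⟩ x
  have hu_le : ∀ x, u x ≤ M :=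
    le_of_convolution_sub_eq (fun z => mul_nonneg (by positivity) (hJpos _)) hK_int hK_mass
      huint.1 hupos hC (fun x => (le_abs_self _).trans (ha_abs x)) hεm hconv_sub
  have ha_meas : AEStronglyMeasurable a := hac.continuous.aestronglyMeasurable
  have ha_plus : Integrable (fun x => max (a x) 0) :=
    (hac.continuous.max continuous_const).integrable_of_hasCompactSupport haplus_cs
  have hu_nonneg : ∀ x, 0 ≤ u x := fun x => (hupos x).le
  refine ⟨hu_le, integral_sq_le_of_convolution_sub_eq hK_int hK_mass huint hu_nonneg hu_le
    ha_meas ha_abs ha_plus hεm.ne' hconv_sub, ?_⟩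
  have henergy := integral_integral_mul_sub_sq_le_of_convolution_sub_eq hK_int hK_mass huint
    hu_nonneg hu_le ha_meas ha_abs ha_plus hεm.le hconv_sub
  have ha_plus_nonneg : 0 ≤ ∫ x, max (a x) 0 := integral_nonneg fun x => le_max_right _ _
  calc 1 / (2 * ε ^ m) * ∫ x, ∫ y, rescaleKernel ε J (x - y) * (u x - u y) ^ 2
      ≤ 1 / (2 * ε ^ m) * (2 * ε ^ m * (M ^ 2 * ∫ x, max (a x) 0)) := by gcongr
    _ ≤ 4 * M ^ 2 * ∫ x, max (a x) 0 := by
      rw [← mul_assoc, one_div_mul_cancel (by positivity), one_mul]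
      nlinarith [mul_nonneg (sq_nonneg M) ha_plus_nonneg]

theorem stmt_10 (N : ℕ) (m ε : ℝ) (hm : 0 ≤ m) (hε : 0 < ε)
    (J a u : EuclideanSpace ℝ (Fin N) → ℝ)
    (hJc : Continuous J) (hJpos : ∀ z, 0 ≤ J z) (hJsym : ∀ z, J (-z) = J z)
    (hJint : Integrable J) (hJmass : ∫ z, J z = 1) (hJ0 : 0 < J 0)
    (hJsupp : Function.support J ⊆ Metric.closedBall 0 1)
    (hac : ContDiff ℝ 1 a) (habd : ∃ C, ∀ x, |a x| ≤ C)
    (haplus_cs : HasCompactSupport (fun x => max (a x) 0))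
    (haplus_ne : ¬ ∀ x, max (a x) 0 = 0)
    (Jε : EuclideanSpace ℝ (Fin N) → ℝ)
    (hJε : ∀ z, Jε z = (ε ^ N)⁻¹ * J (ε⁻¹ • z))
    (hupos : ∀ x, 0 < u x) (hubd : ∃ C, ∀ x, u x ≤ C)
    (huint : Integrable u) (hu2int : Integrable (fun x => (u x) ^ 2))
    (heq : ∀ x, (1 / ε ^ m) * ((∫ y, Jε (x - y) * u y) - u x) + u x * (a x - u x) = 0)
    (M : ℝ) (hM : M = ⨆ x, |a x|) :
    (∀ x, u x ≤ M) ∧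
    (∫ x, (u x) ^ 2) ≤ M * ∫ x, max (a x) 0 ∧
    (1 / (2 * ε ^ m)) * ∫ x, ∫ y, Jε (x - y) * (u x - u y) ^ 2
      ≤ 4 * M ^ 2 * ∫ x, max (a x) 0 :=
  stmt_10_general N m ε hε J a u hJpos hJint hJmass hac habd haplus_cs Jε hJε hupos hubd huint heq M
    hM
end
end

section
/- Any positive bounded solution u of (1/ε^m)(J_ε⋆u − u) + u(a(x)−u) = 0 in ℝ^N satisfies u(x) ≥ (a(x) − ε^{−m})⁺ for all x, i.e., the function (a(x) − 1/ε^m)⁺ is a subsolution that lies below every positive bounded solution. -/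
open MeasureTheory Real

noncomputable section

theorem stmt_12 (N : ℕ) (m ε : ℝ) (hm : 0 ≤ m) (hε : 0 < ε)
    (J a u : EuclideanSpace ℝ (Fin N) → ℝ)
    (hJc : Continuous J) (hJpos : ∀ z, 0 ≤ J z) (hJsym : ∀ z, J (-z) = J z)
    (hJint : Integrable J) (hJmass : ∫ z, J z = 1) (hJ0 : 0 < J 0)
    (hac : Continuous a) (habd : ∃ C, ∀ x, |a x| ≤ C)
    (hupos : ∀ x, 0 < u x) (hubd : ∃ C, ∀ x, u x ≤ C) (huc : Continuous u)
    (heq : ∀ x, (1 / ε ^ m) *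
        ((∫ y, ((ε ^ N)⁻¹ * J (ε⁻¹ • (x - y))) * u y) - u x)
      + u x * (a x - u x) = 0) :
    ∀ x, max (a x - ε ^ (-m)) 0 ≤ u x := by
  intro x
  have hpow : (0:ℝ) < ε ^ m := Real.rpow_pos_of_pos hε m
  have hI : 0 ≤ ∫ y, ((ε ^ N)⁻¹ * J (ε⁻¹ • (x - y))) * u y :=
    integral_nonneg fun y =>
      mul_nonneg (mul_nonneg (inv_nonneg.2 (pow_nonneg hε.le N)) (hJpos _)) (hupos y).le
  have hx := heq x
  have hu : 0 < u x := hupos x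
  have hneg : ε ^ (-m) = (ε ^ m)⁻¹ := Real.rpow_neg hε.le m
  apply max_le _ hu.le
  rw [hneg, ← one_div]
  set I := ∫ y, ((ε ^ N)⁻¹ * J (ε⁻¹ • (x - y))) * u y with hIdef
  set t := 1 / ε ^ m with htdef
  have ht : 0 < t := by positivity
  nlinarith [mul_nonneg ht.le hI, mul_pos hu ht, hx]
end
end

section
/- Let J satisfy (H1)-(H2) and the moment condition ∫ J(z)|z|^{N+1} dz < ∞ (H5), and let φ : ℝ^N → ℝ be continuous, periodic, bounded, with inf φ > 0. For τ > 0 define w(x) = φ(x)/(1 + τ|x|^{N+1}). Then there exist τ₁ > 0 and R₀ > 1 such that for all 0 < τ ≤ τ₁ and all |x| ≥ R₀: τ ∫_{ℝ^N} J(z) [ (|x|^{N+1} − |x+z|^{N+1}) / (1 + τ|x+z|^{N+1}) ] (φ(x+z)/φ(x)) dz ≤ δ, for any prescribed δ > 0. -/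
/-!
Write `a = ‖x‖`, `b = ‖x + z‖`, `r = ‖z‖`, so that `a - r ≤ b`. Where `a ≤ 2r` the quotient
`τ (aᴺ⁺¹ - bᴺ⁺¹) / (1 + τ bᴺ⁺¹)` is at most `τ aᴺ⁺¹ ≤ τ 2ᴺ⁺¹ rᴺ⁺¹`, which is small for small `τ`
by the moment condition. Where `a > 2r` one has `b > a / 2`, the denominator is at least
`τ (a/2)ᴺ⁺¹`, and the mean value bound `aᴺ⁺¹ - bᴺ⁺¹ ≤ (N+1) r aᴺ` leaves `2ᴺ⁺¹ (N+1) r / a`,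
which is small for large `a` since `J ‖z‖` is integrable. The factor `φ(x+z)/φ(x)` is at most
`sup φ / inf φ`.
-/

open MeasureTheory

lemma pow_le_one_add_pow {a : ℝ} (ha : 0 ≤ a) {k m : ℕ} (hkm : k ≤ m) : a ^ k ≤ 1 + a ^ m := by
  rcases le_total a 1 with h | h
  · linarith [pow_le_one₀ (n := k) ha h, pow_nonneg ha m]
  · linarith [pow_le_pow_right₀ h hkm]

lemma pow_succ_sub_pow_succ_le {α : Type*} [CommRing α] [LinearOrder α] [IsOrderedRing α]
    {a b : α} (hb : 0 ≤ b) (hba : b ≤ a) (n : ℕ) :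
    a ^ (n + 1) - b ^ (n + 1) ≤ (a - b) * (n + 1) * a ^ n := by
  simpa [abs_of_nonneg hb, abs_of_nonneg (hb.trans hba), abs_of_nonneg (sub_nonneg.2 hba), hba]
    using (le_abs_self _).trans (abs_pow_sub_pow_le a b (n + 1))

lemma mul_div_one_add_mul_le_div {τ X Y : ℝ} (hτ : 0 ≤ τ) (hX : 0 ≤ X) (hY : 0 < Y) :
    τ * (X / (1 + τ * Y)) ≤ X / Y := by
  rw [mul_div_assoc', div_le_div_iff₀ (by positivity) hY]
  nlinarith

lemma mul_pow_sub_pow_div_le_of_le_two_mul (n : ℕ) {τ a b r : ℝ} (hτ : 0 ≤ τ) (ha : 0 ≤ a)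
    (hb : 0 ≤ b) (har : a ≤ 2 * r) :
    τ * ((a ^ (n + 1) - b ^ (n + 1)) / (1 + τ * b ^ (n + 1))) ≤ τ * (2 * r) ^ (n + 1) := by
  have hden : 1 ≤ 1 + τ * b ^ (n + 1) := by have := pow_nonneg hb (n + 1); nlinarith
  gcongr
  calc (a ^ (n + 1) - b ^ (n + 1)) / (1 + τ * b ^ (n + 1))
      ≤ a ^ (n + 1) / (1 + τ * b ^ (n + 1)) :=
        div_le_div_of_nonneg_right (by linarith [pow_nonneg hb (n + 1)]) (by linarith)
    _ ≤ a ^ (n + 1) := div_le_self (by positivity) hden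
    _ ≤ (2 * r) ^ (n + 1) := by gcongr

lemma mul_pow_sub_pow_div_le_of_two_mul_lt (n : ℕ) {τ a b r : ℝ} (hτ : 0 ≤ τ) (hr : 0 ≤ r)
    (har : 2 * r < a) (hab : a - r ≤ b) :
    τ * ((a ^ (n + 1) - b ^ (n + 1)) / (1 + τ * b ^ (n + 1))) ≤ 2 ^ (n + 1) * (n + 1) * r / a := by
  have ha : 0 < a := by linarith
  have hb : 0 < b := by linarith
  rcases le_or_gt (a ^ (n + 1) - b ^ (n + 1)) 0 with hX | hX
  · exact (mul_nonpos_of_nonneg_of_nonpos hτ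
      (div_nonpos_of_nonpos_of_nonneg hX (by positivity))).trans (by positivity)
  have hba : b < a := (pow_lt_pow_iff_left₀ hb.le ha.le n.succ_ne_zero).mp (sub_pos.mp hX)
  have hmvt : a ^ (n + 1) - b ^ (n + 1) ≤ (n + 1) * r * a ^ n := calc
    _ ≤ (a - b) * (n + 1) * a ^ n := pow_succ_sub_pow_succ_le hb.le hba.le n
    _ ≤ r * (n + 1) * a ^ n := by gcongr; linarith
    _ = (n + 1) * r * a ^ n := by ring
  calc τ * ((a ^ (n + 1) - b ^ (n + 1)) / (1 + τ * b ^ (n + 1)))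
      ≤ (a ^ (n + 1) - b ^ (n + 1)) / b ^ (n + 1) :=
        mul_div_one_add_mul_le_div hτ hX.le (by positivity)
    _ ≤ (n + 1) * r * a ^ n / (a / 2) ^ (n + 1) := by
        gcongr
        linarith
    _ = 2 ^ (n + 1) * (n + 1) * r / a := by rw [div_pow]; field_simp; ring

lemma mul_pow_sub_pow_div_le (n : ℕ) {τ a b r : ℝ} (hτ : 0 ≤ τ) (ha : 0 ≤ a) (hb : 0 ≤ b)
    (hr : 0 ≤ r) (hab : a - r ≤ b) :
    τ * ((a ^ (n + 1) - b ^ (n + 1)) / (1 + τ * b ^ (n + 1))) ≤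
      τ * 2 ^ (n + 1) * r ^ (n + 1) + 2 ^ (n + 1) * (n + 1) * r / a := by
  rcases le_or_gt a (2 * r) with har | har
  · calc _ ≤ τ * (2 * r) ^ (n + 1) := mul_pow_sub_pow_div_le_of_le_two_mul n hτ ha hb har
      _ = τ * 2 ^ (n + 1) * r ^ (n + 1) := by ring
      _ ≤ _ := le_add_of_nonneg_right (by positivity)
  · exact (mul_pow_sub_pow_div_le_of_two_mul_lt n hτ hr har hab).trans
      (le_add_of_nonneg_left (by positivity))

lemma integral_le_integral_of_le_of_nonneg {α : Type*} [MeasurableSpace α] {μ : Measure α}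
    {f g : α → ℝ} (hg : Integrable g μ) (hg0 : 0 ≤ g) (hfg : f ≤ g) :
    ∫ a, f a ∂μ ≤ ∫ a, g a ∂μ := by
  by_cases hf : Integrable f μ
  · exact integral_mono hf hg hfg
  · rw [integral_undef hf]
    exact integral_nonneg hg0

section Integral

variable {E : Type*} [NormedAddCommGroup E] [MeasurableSpace E] [OpensMeasurableSpace E]
  {μ : Measure E} {J : E → ℝ}

lemma Integrable.mul_norm_pow_of_le {k m : ℕ} (hkm : k ≤ m) (hJ : Integrable J μ)
    (hJm : Integrable (fun z ↦ J z * ‖z‖ ^ m) μ) : Integrable (fun z ↦ J z * ‖z‖ ^ k) μ := by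
  refine (hJ.norm.add hJm.norm).mono'
    (hJ.aestronglyMeasurable.mul (continuous_norm.pow k).aestronglyMeasurable) ?_
  filter_upwards with z
  simp only [norm_mul, norm_pow, norm_norm, Pi.add_apply]
  nlinarith [pow_le_one_add_pow (norm_nonneg z) hkm, norm_nonneg (J z)]

theorem mul_integral_pow_sub_pow_div_le (n : ℕ) {ρ : E → ℝ} {M τ : ℝ} (hJ : Integrable J μ)
    (hJ0 : ∀ z, 0 ≤ J z) (hJm : Integrable (fun z ↦ J z * ‖z‖ ^ (n + 1)) μ)
    (hρ0 : ∀ z, 0 ≤ ρ z) (hρM : ∀ z, ρ z ≤ M) (hτ : 0 ≤ τ) (x : E) :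
    τ * ∫ z, J z * ((‖x‖ ^ (n + 1) - ‖x + z‖ ^ (n + 1)) / (1 + τ * ‖x + z‖ ^ (n + 1))) * ρ z ∂μ ≤
      τ * (M * 2 ^ (n + 1) * ∫ z, J z * ‖z‖ ^ (n + 1) ∂μ) +
        M * 2 ^ (n + 1) * (n + 1) * (∫ z, J z * ‖z‖ ∂μ) / ‖x‖ := by
  have hM : 0 ≤ M := (hρ0 0).trans (hρM 0)
  have hJ1 : Integrable (fun z ↦ J z * ‖z‖) μ := by
    simpa using Integrable.mul_norm_pow_of_le (k := 1) (by omega) hJ hJm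
  set c₁ := τ * (M * 2 ^ (n + 1))
  set c₂ := M * 2 ^ (n + 1) * (n + 1) / ‖x‖
  have hpoint : ∀ z, τ * (J z * ((‖x‖ ^ (n + 1) - ‖x + z‖ ^ (n + 1)) /
      (1 + τ * ‖x + z‖ ^ (n + 1))) * ρ z) ≤ c₁ * (J z * ‖z‖ ^ (n + 1)) + c₂ * (J z * ‖z‖) := by
    intro z
    have hq := mul_pow_sub_pow_div_le n hτ (norm_nonneg x) (norm_nonneg (x + z))
      (norm_nonneg z) (norm_sub_le_norm_add x z)
    have hbound : 0 ≤ τ * 2 ^ (n + 1) * ‖z‖ ^ (n + 1) + 2 ^ (n + 1) * (n + 1) * ‖z‖ / ‖x‖ := by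
      positivity
    have hJρ : 0 ≤ J z * ρ z := mul_nonneg (hJ0 z) (hρ0 z)
    calc _ = J z * ρ z * (τ * ((‖x‖ ^ (n + 1) - ‖x + z‖ ^ (n + 1)) /
          (1 + τ * ‖x + z‖ ^ (n + 1)))) := by ring
      _ ≤ J z * ρ z * (τ * 2 ^ (n + 1) * ‖z‖ ^ (n + 1) + 2 ^ (n + 1) * (n + 1) * ‖z‖ / ‖x‖) :=
        mul_le_mul_of_nonneg_left hq hJρ
      _ ≤ J z * M * (τ * 2 ^ (n + 1) * ‖z‖ ^ (n + 1) + 2 ^ (n + 1) * (n + 1) * ‖z‖ / ‖x‖) :=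
        mul_le_mul_of_nonneg_right (mul_le_mul_of_nonneg_left (hρM z) (hJ0 z)) hbound
      _ = c₁ * (J z * ‖z‖ ^ (n + 1)) + c₂ * (J z * ‖z‖) := by ring
  have hnonneg : ∀ z, 0 ≤ c₁ * (J z * ‖z‖ ^ (n + 1)) + c₂ * (J z * ‖z‖) := fun z ↦ by
    have := hJ0 z
    positivity
  calc _ = ∫ z, τ * (J z * ((‖x‖ ^ (n + 1) - ‖x + z‖ ^ (n + 1)) /
        (1 + τ * ‖x + z‖ ^ (n + 1))) * ρ z) ∂μ := (integral_const_mul _ _).symm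
    _ ≤ ∫ z, c₁ * (J z * ‖z‖ ^ (n + 1)) + c₂ * (J z * ‖z‖) ∂μ :=
        integral_le_integral_of_le_of_nonneg ((hJm.const_mul c₁).add (hJ1.const_mul c₂))
          hnonneg hpoint
    _ = _ := by
        rw [integral_add (hJm.const_mul c₁) (hJ1.const_mul c₂), integral_const_mul,
          integral_const_mul]
        ring

end Integral

lemma exists_mul_add_div_le {δ : ℝ} (hδ : 0 < δ) {A B : ℝ} (hA : 0 ≤ A) (hB : 0 ≤ B) :
    ∃ τ₁ > (0 : ℝ), ∃ R₀ > (1 : ℝ), ∀ τ ≤ τ₁, ∀ a ≥ R₀, τ * A + B / a ≤ δ := by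
  have hR : 0 < 2 * (B + 1) / δ := by positivity
  refine ⟨δ / (2 * (A + 1)), by positivity, 2 * (B + 1) / δ + 1, by linarith,
    fun τ hτ a ha ↦ ?_⟩
  have hτA : τ * A ≤ δ / 2 := calc
    τ * A ≤ δ / (2 * (A + 1)) * A := mul_le_mul_of_nonneg_right hτ hA
    _ ≤ δ / 2 := by
      rw [div_mul_eq_mul_div, div_le_div_iff₀ (by positivity) two_pos]
      nlinarith
  have hBa : B / a ≤ δ / 2 := by
    have hδa : 2 * (B + 1) + δ ≤ δ * a := by
      have := mul_le_mul_of_nonneg_left ha hδ.le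
      rwa [mul_add, mul_div_cancel₀ _ hδ.ne', mul_one] at this
    rw [div_le_div_iff₀ (by linarith) two_pos]
    linarith
  linarith

theorem stmt_18_general (N : ℕ)
    (J φ : EuclideanSpace ℝ (Fin N) → ℝ)
    (hJpos : ∀ z, 0 ≤ J z)
    (hJint : Integrable J)
    (hJmom : Integrable (fun z => J z * ‖z‖ ^ (N + 1)))
    (hφbd : ∃ C, ∀ x, φ x ≤ C)
    (hφinf : ∃ c > (0:ℝ), ∀ x, c ≤ φ x)
    (δ : ℝ) (hδ : 0 < δ) :
    ∃ τ₁ > (0:ℝ), ∃ R₀ > (1:ℝ), ∀ τ : ℝ, 0 < τ → τ ≤ τ₁ →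
      ∀ x : EuclideanSpace ℝ (Fin N), R₀ ≤ ‖x‖ →
        τ * ∫ z, J z *
            ((‖x‖ ^ (N + 1) - ‖x + z‖ ^ (N + 1)) / (1 + τ * ‖x + z‖ ^ (N + 1)))
            * (φ (x + z) / φ x)
          ≤ δ := by
  obtain ⟨C, hC⟩ := hφbd
  obtain ⟨c, hc, hcφ⟩ := hφinf
  have hC0 : 0 ≤ C := hc.le.trans ((hcφ 0).trans (hC 0))
  have hA : 0 ≤ ∫ z, J z * ‖z‖ ^ (N + 1) := integral_nonneg fun z ↦ by have := hJpos z; positivity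
  have hB : 0 ≤ ∫ z, J z * ‖z‖ := integral_nonneg fun z ↦ by have := hJpos z; positivity
  obtain ⟨τ₁, hτ₁, R₀, hR₀, hsmall⟩ := exists_mul_add_div_le hδ
    (A := C / c * 2 ^ (N + 1) * ∫ z, J z * ‖z‖ ^ (N + 1))
    (B := C / c * 2 ^ (N + 1) * (N + 1) * ∫ z, J z * ‖z‖) (by positivity) (by positivity)
  refine ⟨τ₁, hτ₁, R₀, hR₀, fun τ hτ hττ₁ x hx ↦ ?_⟩
  have hρ0 : ∀ z, 0 ≤ φ (x + z) / φ x := fun z ↦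
    div_nonneg (hc.le.trans (hcφ _)) (hc.le.trans (hcφ _))
  have hρM : ∀ z, φ (x + z) / φ x ≤ C / c := fun z ↦ div_le_div₀ hC0 (hC _) hc (hcφ x)
  exact (mul_integral_pow_sub_pow_div_le N hJint hJpos hJmom hρ0 hρM hτ.le x).trans
    (hsmall τ hττ₁ ‖x‖ hx)

theorem stmt_18 (N : ℕ)
    (J φ : EuclideanSpace ℝ (Fin N) → ℝ)
    (hJc : Continuous J) (hJpos : ∀ z, 0 ≤ J z) (hJsym : ∀ z, J (-z) = J z)
    (hJint : Integrable J) (hJmass : ∫ z, J z = 1) (hJ0 : 0 < J 0)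
    (hJmom : Integrable (fun z => J z * ‖z‖ ^ (N + 1)))
    (hφc : Continuous φ)
    (hφper : ∃ L > (0:ℝ), ∀ (x v : EuclideanSpace ℝ (Fin N)),
      (∀ i : Fin N, ∃ k : ℤ, v i = (k : ℝ) * L) → φ (x + v) = φ x)
    (hφbd : ∃ C, ∀ x, φ x ≤ C)
    (hφinf : ∃ c > (0:ℝ), ∀ x, c ≤ φ x)
    (δ : ℝ) (hδ : 0 < δ) :
    ∃ τ₁ > (0:ℝ), ∃ R₀ > (1:ℝ), ∀ τ : ℝ, 0 < τ → τ ≤ τ₁ →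
      ∀ x : EuclideanSpace ℝ (Fin N), R₀ ≤ ‖x‖ →
        τ * ∫ z, J z *
            ((‖x‖ ^ (N + 1) - ‖x + z‖ ^ (N + 1)) / (1 + τ * ‖x + z‖ ^ (N + 1)))
            * (φ (x + z) / φ x)
          ≤ δ :=
  stmt_18_general N J φ hJpos hJint hJmom hφbd hφinf δ hδ
end
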